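/- arXiv:2206.14280 — 2 statements merged into one kernel-verified Lean document; each statement's English description precedes it below -/
import Mathlib

section
/- Let α, β > −1, let p be a positive integer, and let b > −p be such that β − b and b + p − 1 − β are both nonnegative integers. Then for each n ∈ ℕ there exist real coefficients c_m for max(0, n−p) ≤ m ≤ n+p such that for every x ∈ (−1,1], ∫_{−1}^{x} Q_n^{(α,β,b,p)}(t) dt = Σ_{m=max(0,n−p)}^{n+p} c_m Q_m^{(α,β,b,p)}(x); that is, the matrix representing the integration operator in the JFP basis has bandwidths (p, p). -/
open MeasureTheory

noncomputable def Ccoef (α β : ℝ) (k n : ℕ) : ℝ :=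
  if k ≤ n then
    (-1 : ℝ) ^ (n - k) * (ascPochhammer ℝ (n - k)).eval ((k : ℝ) + β + 1)
      * (ascPochhammer ℝ k).eval ((n : ℝ) + α + β + 1)
      / (2 ^ k * (Nat.factorial (n - k)) * (Nat.factorial k))
  else 0

noncomputable def jacobiP (α β : ℝ) (n : ℕ) (x : ℝ) : ℝ :=
  ∑ k ∈ Finset.range (n + 1), Ccoef α β k n * (1 + x) ^ k

noncomputable def jfpQ (α β b p : ℝ) (n : ℕ) (x : ℝ) : ℝ :=
  (2 * ((1 + x) / 2) ^ (1 / p)) ^ b * jacobiP α β n (2 * ((1 + x) / 2) ^ (1 / p) - 1)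

/-
With `z = ((1 + x) / 2) ^ (1 / p)` and the shifted Jacobi polynomial `J_n(z) = P_n(2z - 1)` we
have `Q_m(x) = 2 ^ b z ^ b J_m(z)`, and the substitution `t = 2 s ^ p - 1` turns `∫_{-1}^x Q_n`
into `2 ^ b 2p ∫_0^z s ^ (γ - 1) J_n(s) ds` with `γ = b + p`. If the Euler operator `X d/dX + γ`
maps `r` to `J_n`, then `s ^ (γ - 1) J_n(s) = (s ^ γ r(s))'`, so the integral is
`2 ^ b 2p z ^ b (X ^ p r)(z)`.
Write `β = b + j` and `γ = β + i + 1`, so `p = j + i + 1`. The contiguous relations of the Jacobi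
polynomials put `J_n^{α,β}` in the span of `J^{α+1,γ-1}_{[n-i-1,n]}`, and the Euler operator maps
`J_m^{α,γ}` to `(m + γ) J_m^{α+1,γ-1}`, so `r ∈ span J^{α,γ}_{[n-i-1,n]}`. Multiplying by
`X` sends `J_m^{α,β'+1}` into `span J^{α,β'}_{[m,m+1]}`, so
`X ^ (i+1) r ∈ span J^{α,β}_{[n-i-1,n+i+1]}`, and the remaining `j` factors of `X` widen this
band to `[n-p,n+p]`.
-/

open Polynomial Set

theorem ascPochhammer_eval_succ_left {S : Type*} [CommSemiring S] (m : ℕ) (x : S) :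
    (ascPochhammer S (m + 1)).eval x = x * (ascPochhammer S m).eval (x + 1) := by
  simp [ascPochhammer_succ_left, eval_comp]

theorem mul_ascPochhammer_eval_add_one {S : Type*} [CommSemiring S] (m : ℕ) (x : S) :
    x * (ascPochhammer S m).eval (x + 1) = (x + m) * (ascPochhammer S m).eval x := by
  rw [← ascPochhammer_eval_succ_left, ascPochhammer_succ_eval, mul_comm]

/- Coefficientwise contiguous relations; besides rational arithmetic they only use
`x (x + 1)_k = (x + k) (x)_k` and the recursions of the rising factorial. -/
section Ccoef

variable (α β : ℝ)

theorem Ccoef_of_lt {k n : ℕ} (h : n < k) : Ccoef α β k n = 0 := by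
  simp [Ccoef, Nat.not_le.2 h]

theorem Ccoef_of_le {k n : ℕ} (h : k ≤ n) : Ccoef α β k n =
    (-1) ^ (n - k) * (ascPochhammer ℝ (n - k)).eval (k + β + 1)
      * (ascPochhammer ℝ k).eval (n + α + β + 1) / (2 ^ k * (n - k).factorial * k.factorial) := by
  simp [Ccoef, h]

theorem Ccoef_self (n : ℕ) :
    Ccoef α β n n = (ascPochhammer ℝ n).eval (n + α + β + 1) / (2 ^ n * n.factorial) := by
  simp [Ccoef]

theorem natCast_add_mul_Ccoef (k n : ℕ) :
    (k + β) * Ccoef α β k n = (n + β) * Ccoef (α + 1) (β - 1) k n := by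
  rcases le_or_gt k n with h | h
  · rw [Ccoef_of_le _ _ h, Ccoef_of_le _ _ h]
    have hshift := mul_ascPochhammer_eval_add_one (n - k) ((k : ℝ) + β)
    rw [Nat.cast_sub h] at hshift
    rw [show (k : ℝ) + (β - 1) + 1 = k + β by ring,
      show (n : ℝ) + (α + 1) + (β - 1) + 1 = n + α + β + 1 by ring]
    field_simp
    linear_combination (ascPochhammer ℝ k).eval ((n : ℝ) + α + β + 1) * hshift
  · simp [Ccoef_of_lt _ _ h]

theorem Ccoef_contiguous_beta {n : ℕ} (hn : 1 ≤ n) (k : ℕ) :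
    (2 * n + α + β + 1) * Ccoef α β k n
      = (n + α + β + 1) * Ccoef α (β + 1) k n + (n + α) * Ccoef α (β + 1) k (n - 1) := by
  rcases lt_trichotomy k n with hk | rfl | hk
  · obtain ⟨d, rfl⟩ : ∃ d, n = k + d + 1 := ⟨n - k - 1, by omega⟩
    rw [Ccoef_of_le _ _ (by omega : k ≤ k + d + 1), Ccoef_of_le _ _ (by omega : k ≤ k + d + 1),
        Ccoef_of_le _ _ (by omega : k ≤ k + d + 1 - 1)]
    simp only [show k + d + 1 - k = d + 1 by omega, show k + d + 1 - 1 = k + d by omega,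
      show k + d - k = d by omega]
    push_cast [Nat.factorial_succ]
    set x : ℝ := k + d + 1 + α + β + 1
    have h := mul_ascPochhammer_eval_add_one k x
    rw [ascPochhammer_eval_succ_left d ((k : ℝ) + β + 1),
        show (k : ℝ) + β + 1 + 1 = k + (β + 1) + 1 by ring,
        ascPochhammer_succ_eval d ((k : ℝ) + (β + 1) + 1), pow_succ,
        show (k : ℝ) + d + 1 + α + (β + 1) + 1 = x + 1 by ring,
        show (k : ℝ) + d + α + (β + 1) + 1 = x by ring]
    field_simp
    linear_combination
      (eval ((k : ℝ) + (β + 1) + 1) (ascPochhammer ℝ d) * (k + (β + 1) + 1 + d)) * h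
  · rw [Ccoef_self, Ccoef_self, Ccoef_of_lt _ _ (by omega : k - 1 < k)]
    have h := mul_ascPochhammer_eval_add_one k ((k : ℝ) + α + β + 1)
    rw [show (k : ℝ) + α + β + 1 + 1 = k + α + (β + 1) + 1 by ring] at h
    field_simp
    linear_combination -h
  · rw [Ccoef_of_lt _ _ hk, Ccoef_of_lt _ _ hk, Ccoef_of_lt _ _ (by omega : n - 1 < k)]
    ring

theorem Ccoef_contiguous_alpha {n : ℕ} (hn : 1 ≤ n) (k : ℕ) :
    (2 * n + α + β + 1) * Ccoef α β k n
      = (n + α + β + 1) * Ccoef (α + 1) β k n - (n + β) * Ccoef (α + 1) β k (n - 1) := by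
  rcases lt_trichotomy k n with hk | rfl | hk
  · obtain ⟨d, rfl⟩ : ∃ d, n = k + d + 1 := ⟨n - k - 1, by omega⟩
    rw [Ccoef_of_le _ _ (by omega : k ≤ k + d + 1), Ccoef_of_le _ _ (by omega : k ≤ k + d + 1),
        Ccoef_of_le _ _ (by omega : k ≤ k + d + 1 - 1)]
    simp only [show k + d + 1 - k = d + 1 by omega, show k + d + 1 - 1 = k + d by omega,
      show k + d - k = d by omega]
    push_cast [Nat.factorial_succ]
    set x : ℝ := k + d + 1 + α + β + 1
    have h := mul_ascPochhammer_eval_add_one k x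
    rw [ascPochhammer_succ_eval d ((k : ℝ) + β + 1), pow_succ,
        show (k : ℝ) + d + 1 + (α + 1) + β + 1 = x + 1 by ring,
        show (k : ℝ) + d + (α + 1) + β + 1 = x by ring]
    field_simp
    linear_combination (eval ((k : ℝ) + β + 1) (ascPochhammer ℝ d) * (k + β + 1 + d)) * h
  · rw [Ccoef_self, Ccoef_self, Ccoef_of_lt _ _ (by omega : k - 1 < k)]
    have h := mul_ascPochhammer_eval_add_one k ((k : ℝ) + α + β + 1)
    rw [show (k : ℝ) + α + β + 1 + 1 = k + (α + 1) + β + 1 by ring] at h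
    field_simp
    linear_combination -h
  · rw [Ccoef_of_lt _ _ hk, Ccoef_of_lt _ _ hk, Ccoef_of_lt _ _ (by omega : n - 1 < k)]
    ring

theorem Ccoef_zero_succ (n : ℕ) :
    (n + 1) * Ccoef α β 0 (n + 1) = -((n + β + 1) * Ccoef α β 0 n) := by
  rw [Ccoef_of_le _ _ (Nat.zero_le n), Ccoef_of_le _ _ (Nat.zero_le (n + 1))]
  push_cast [Nat.sub_zero, Nat.factorial_succ]
  rw [ascPochhammer_succ_eval n ((0 : ℝ) + β + 1)]
  simp only [ascPochhammer_zero, eval_one]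
  field_simp
  ring

theorem Ccoef_mul_X (n k : ℕ) :
    (2 * n + α + β + 2) * Ccoef α (β + 1) k n
      = 2 * ((n + β + 1) * Ccoef α β (k + 1) n + (n + 1) * Ccoef α β (k + 1) (n + 1)) := by
  rcases lt_trichotomy (k + 1) (n + 1) with hk | hk | hk
  · obtain ⟨d, rfl⟩ : ∃ d, n = k + 1 + d := ⟨n - k - 1, by omega⟩
    rw [Ccoef_of_le _ _ (by omega : k ≤ k + 1 + d), Ccoef_of_le _ _ (by omega : k + 1 ≤ k + 1 + d),
        Ccoef_of_le _ _ (by omega : k + 1 ≤ k + 1 + d + 1)]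
    simp only [show k + 1 + d - k = d + 1 by omega, show k + 1 + d - (k + 1) = d by omega,
      show k + 1 + d + 1 - (k + 1) = d + 1 by omega]
    push_cast [Nat.factorial_succ]
    rw [show (k : ℝ) + 1 + β + 1 = k + (β + 1) + 1 by ring,
        ascPochhammer_succ_eval d ((k : ℝ) + (β + 1) + 1),
        ascPochhammer_eval_succ_left k ((k : ℝ) + 1 + d + α + β + 1),
        ascPochhammer_succ_eval k ((k : ℝ) + 1 + d + 1 + α + β + 1),
        show (k : ℝ) + 1 + d + α + β + 1 + 1 = k + d + 1 + α + (β + 1) + 1 by ring,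
        show (k : ℝ) + 1 + d + 1 + α + β + 1 = k + d + 1 + α + (β + 1) + 1 by ring,
        show (k : ℝ) + 1 + d + α + (β + 1) + 1 = k + d + 1 + α + (β + 1) + 1 by ring, pow_succ]
    field_simp
    ring
  · obtain rfl : n = k := by omega
    rw [Ccoef_self, Ccoef_of_lt _ _ (by omega : n < n + 1), Ccoef_self]
    push_cast [Nat.factorial_succ]
    rw [ascPochhammer_succ_eval n ((n : ℝ) + 1 + α + β + 1),
      show (n : ℝ) + 1 + α + β + 1 = n + α + (β + 1) + 1 by ring, pow_succ]
    field_simp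
    ring
  · rw [Ccoef_of_lt _ _ (by omega : n < k), Ccoef_of_lt _ _ (by omega : n < k + 1),
        Ccoef_of_lt _ _ (by omega : n + 1 < k + 1)]
    ring

end Ccoef

noncomputable def eulerOp (γ : ℝ) : ℝ[X] →ₗ[ℝ] ℝ[X] :=
  LinearMap.mulLeft ℝ X ∘ₗ derivative + γ • LinearMap.id

theorem eulerOp_apply (γ : ℝ) (q : ℝ[X]) : eulerOp γ q = X * derivative q + γ • q := rfl

theorem coeff_eulerOp (γ : ℝ) (q : ℝ[X]) (k : ℕ) :
    (eulerOp γ q).coeff k = (k + γ) * q.coeff k := by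
  rcases k with _ | k
  · simp [eulerOp_apply, mul_coeff_zero]
  · simp only [eulerOp_apply, coeff_add, coeff_X_mul, coeff_derivative, coeff_smul, smul_eq_mul]
    push_cast
    ring

theorem eulerOp_monomial (γ : ℝ) (k : ℕ) (a : ℝ) :
    eulerOp γ (monomial k a) = monomial k ((k + γ) * a) := by
  ext i
  rw [coeff_eulerOp, coeff_monomial, coeff_monomial]
  split_ifs with h <;> simp [h]

noncomputable def shiftedJacobi (α β : ℝ) (n : ℕ) : ℝ[X] :=
  ∑ k ∈ Finset.range (n + 1), monomial k (Ccoef α β k n * 2 ^ k)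

section shiftedJacobi

variable (α β : ℝ)

theorem coeff_shiftedJacobi (n k : ℕ) : (shiftedJacobi α β n).coeff k = Ccoef α β k n * 2 ^ k := by
  rw [shiftedJacobi, finsetSum_coeff]
  simp only [coeff_monomial, Finset.sum_ite_eq', Finset.mem_range]
  split_ifs with h
  · rfl
  · rw [Ccoef_of_lt _ _ (by omega), zero_mul]

theorem eval_shiftedJacobi (n : ℕ) (z : ℝ) :
    (shiftedJacobi α β n).eval z = jacobiP α β n (2 * z - 1) := by
  simp only [shiftedJacobi, jacobiP, eval_finsetSum, eval_monomial]
  refine Finset.sum_congr rfl fun k _ => ?_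
  ring

theorem shiftedJacobi_zero : shiftedJacobi α β 0 = 1 := by
  simp [shiftedJacobi, Ccoef]

theorem shiftedJacobi_contiguous_beta {n : ℕ} (hn : 1 ≤ n) :
    (2 * n + α + β + 1 : ℝ) • shiftedJacobi α β n
      = (n + α + β + 1 : ℝ) • shiftedJacobi α (β + 1) n
        + (n + α : ℝ) • shiftedJacobi α (β + 1) (n - 1) := by
  ext k
  simp only [coeff_smul, coeff_add, coeff_shiftedJacobi, smul_eq_mul]
  linear_combination 2 ^ k * Ccoef_contiguous_beta α β hn k

theorem shiftedJacobi_contiguous_alpha {n : ℕ} (hn : 1 ≤ n) :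
    (2 * n + α + β + 1 : ℝ) • shiftedJacobi α β n
      = (n + α + β + 1 : ℝ) • shiftedJacobi (α + 1) β n
        - (n + β : ℝ) • shiftedJacobi (α + 1) β (n - 1) := by
  ext k
  simp only [coeff_smul, coeff_sub, coeff_shiftedJacobi, smul_eq_mul]
  linear_combination 2 ^ k * Ccoef_contiguous_alpha α β hn k

theorem X_mul_shiftedJacobi (n : ℕ) :
    (2 * n + α + β + 2 : ℝ) • (X * shiftedJacobi α (β + 1) n)
      = (n + β + 1 : ℝ) • shiftedJacobi α β n + (n + 1 : ℝ) • shiftedJacobi α β (n + 1) := by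
  ext k
  rcases k with _ | k
  · simp only [coeff_smul, coeff_add, coeff_shiftedJacobi, smul_eq_mul, mul_coeff_zero,
      coeff_X_zero, zero_mul, mul_zero]
    linear_combination -Ccoef_zero_succ α β n
  · simp only [coeff_smul, coeff_add, coeff_shiftedJacobi, smul_eq_mul, coeff_X_mul]
    linear_combination 2 ^ k * Ccoef_mul_X α β n k

theorem eulerOp_shiftedJacobi (n : ℕ) :
    eulerOp β (shiftedJacobi α β n) = (n + β : ℝ) • shiftedJacobi (α + 1) (β - 1) n := by
  ext k
  rw [coeff_eulerOp, coeff_smul, coeff_shiftedJacobi, coeff_shiftedJacobi, smul_eq_mul]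
  linear_combination 2 ^ k * natCast_add_mul_Ccoef α β k n

end shiftedJacobi

noncomputable def jacobiSpan (α β : ℝ) (a c : ℕ) : Submodule ℝ ℝ[X] :=
  Submodule.span ℝ (shiftedJacobi α β '' Set.Icc a c)

section jacobiSpan

variable {α β : ℝ}

theorem shiftedJacobi_mem_jacobiSpan {a c m : ℕ} (ha : a ≤ m) (hc : m ≤ c) :
    shiftedJacobi α β m ∈ jacobiSpan α β a c :=
  Submodule.subset_span ⟨m, ⟨ha, hc⟩, rfl⟩

theorem jacobiSpan_mono {a c a' c' : ℕ} (ha : a' ≤ a) (hc : c ≤ c') :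
    jacobiSpan α β a c ≤ jacobiSpan α β a' c' :=
  Submodule.span_mono (Set.image_mono (Set.Icc_subset_Icc ha hc))

theorem jacobiSpan_le {a c : ℕ} {T : Submodule ℝ ℝ[X]}
    (h : ∀ m, a ≤ m → m ≤ c → shiftedJacobi α β m ∈ T) : jacobiSpan α β a c ≤ T := by
  rw [jacobiSpan, Submodule.span_le]
  rintro _ ⟨m, ⟨ha, hc⟩, rfl⟩
  exact h m ha hc

theorem exists_sum_of_mem_jacobiSpan {a c : ℕ} {q : ℝ[X]} (h : q ∈ jacobiSpan α β a c) :
    ∃ f : ℕ → ℝ, q = ∑ m ∈ Finset.Icc a c, f m • shiftedJacobi α β m := by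
  rw [jacobiSpan, Finsupp.mem_span_image_iff_linearCombination] at h
  obtain ⟨l, hl, rfl⟩ := h
  refine ⟨l, Finsupp.sum_of_support_subset l (fun m hm => ?_) _ (by simp)⟩
  simpa using hl hm

theorem shiftedJacobi_mem_jacobiSpan_beta_succ (hα : -1 < α) (hβ : -1 < β) (n : ℕ) :
    shiftedJacobi α β n ∈ jacobiSpan α (β + 1) (n - 1) n := by
  rcases Nat.eq_zero_or_pos n with rfl | hn
  · rw [shiftedJacobi_zero, ← shiftedJacobi_zero α (β + 1)]
    exact shiftedJacobi_mem_jacobiSpan le_rfl le_rfl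
  · have hd : (2 * n + α + β + 1 : ℝ) ≠ 0 := by
      have : (1 : ℝ) ≤ n := by exact_mod_cast hn
      linarith
    rw [← Submodule.smul_mem_iff _ hd, shiftedJacobi_contiguous_beta α β hn]
    exact add_mem (Submodule.smul_mem _ _ (shiftedJacobi_mem_jacobiSpan (by omega) le_rfl))
      (Submodule.smul_mem _ _ (shiftedJacobi_mem_jacobiSpan le_rfl (by omega)))

theorem shiftedJacobi_mem_jacobiSpan_alpha_succ (hα : -1 < α) (hβ : -1 < β) (n : ℕ) :
    shiftedJacobi α β n ∈ jacobiSpan (α + 1) β (n - 1) n := by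
  rcases Nat.eq_zero_or_pos n with rfl | hn
  · rw [shiftedJacobi_zero, ← shiftedJacobi_zero (α + 1) β]
    exact shiftedJacobi_mem_jacobiSpan le_rfl le_rfl
  · have hd : (2 * n + α + β + 1 : ℝ) ≠ 0 := by
      have : (1 : ℝ) ≤ n := by exact_mod_cast hn
      linarith
    rw [← Submodule.smul_mem_iff _ hd, shiftedJacobi_contiguous_alpha α β hn]
    exact sub_mem (Submodule.smul_mem _ _ (shiftedJacobi_mem_jacobiSpan (by omega) le_rfl))
      (Submodule.smul_mem _ _ (shiftedJacobi_mem_jacobiSpan le_rfl (by omega)))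

theorem X_mul_shiftedJacobi_mem_jacobiSpan (hα : -1 < α) (hβ : -1 < β) (n : ℕ) :
    X * shiftedJacobi α (β + 1) n ∈ jacobiSpan α β n (n + 1) := by
  have hd : (2 * n + α + β + 2 : ℝ) ≠ 0 := by
    have : (0 : ℝ) ≤ n := n.cast_nonneg
    linarith
  rw [← Submodule.smul_mem_iff _ hd, X_mul_shiftedJacobi]
  exact add_mem (Submodule.smul_mem _ _ (shiftedJacobi_mem_jacobiSpan le_rfl (by omega)))
    (Submodule.smul_mem _ _ (shiftedJacobi_mem_jacobiSpan (by omega) le_rfl))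

theorem jacobiSpan_le_alpha_succ (hα : -1 < α) (hβ : -1 < β) (a c : ℕ) :
    jacobiSpan α β a c ≤ jacobiSpan (α + 1) β (a - 1) c :=
  jacobiSpan_le fun m ha hc => jacobiSpan_mono (by omega) hc
    (shiftedJacobi_mem_jacobiSpan_alpha_succ hα hβ m)

theorem jacobiSpan_le_beta_add (hα : -1 < α) (hβ : -1 < β) (j a c : ℕ) :
    jacobiSpan α β a c ≤ jacobiSpan α (β + j) (a - j) c := by
  induction j with
  | zero => simp
  | succ j ih =>
    refine ih.trans (jacobiSpan_le fun m ha hc => ?_)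
    have hβj : -1 < β + j := by linarith [(j.cast_nonneg : (0 : ℝ) ≤ j)]
    rw [Nat.cast_succ, ← add_assoc]
    exact jacobiSpan_mono (by omega) hc (shiftedJacobi_mem_jacobiSpan_beta_succ hα hβj m)

theorem X_mul_mem_jacobiSpan_of_beta_succ (hα : -1 < α) (hβ : -1 < β) {a c : ℕ} {q : ℝ[X]}
    (hq : q ∈ jacobiSpan α (β + 1) a c) : X * q ∈ jacobiSpan α β a (c + 1) := by
  suffices jacobiSpan α (β + 1) a c ≤ (jacobiSpan α β a (c + 1)).comap (LinearMap.mulLeft ℝ X) from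
    this hq
  exact jacobiSpan_le fun m ha hc => jacobiSpan_mono ha (by omega)
    (X_mul_shiftedJacobi_mem_jacobiSpan hα hβ m)

theorem X_pow_mul_mem_jacobiSpan_of_beta_add (hα : -1 < α) (hβ : -1 < β) (j : ℕ) {a c : ℕ}
    {q : ℝ[X]} (hq : q ∈ jacobiSpan α (β + j) a c) : X ^ j * q ∈ jacobiSpan α β a (c + j) := by
  induction j generalizing c q with
  | zero => simpa using hq
  | succ j ih =>
    have hβj : -1 < β + j := by linarith [(j.cast_nonneg : (0 : ℝ) ≤ j)]
    rw [Nat.cast_succ, ← add_assoc] at hq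
    rw [pow_succ, mul_assoc, ← add_assoc, add_right_comm]
    exact ih (X_mul_mem_jacobiSpan_of_beta_succ hα hβj hq)

theorem X_pow_mul_mem_jacobiSpan (hα : -1 < α) (hβ : -1 < β) (j : ℕ) {a c : ℕ} {q : ℝ[X]}
    (hq : q ∈ jacobiSpan α β a c) : X ^ j * q ∈ jacobiSpan α β (a - j) (c + j) := by
  induction j with
  | zero => simpa using hq
  | succ j ih =>
    have h := jacobiSpan_le_beta_add hα hβ 1 _ _ ih
    rw [Nat.cast_one] at h
    rw [pow_succ', mul_assoc]
    exact jacobiSpan_mono (by omega) (by omega) (X_mul_mem_jacobiSpan_of_beta_succ hα hβ h)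

theorem jacobiSpan_le_map_eulerOp {γ : ℝ} (hγ : 0 < γ) (a c : ℕ) :
    jacobiSpan (α + 1) (γ - 1) a c ≤ (jacobiSpan α γ a c).map (eulerOp γ) := by
  refine jacobiSpan_le fun m ha hc => ⟨((m : ℝ) + γ)⁻¹ • shiftedJacobi α γ m,
    Submodule.smul_mem _ _ (shiftedJacobi_mem_jacobiSpan ha hc), ?_⟩
  have hm : (m : ℝ) + γ ≠ 0 := by linarith [(m.cast_nonneg : (0 : ℝ) ≤ m)]
  rw [map_smul, eulerOp_shiftedJacobi, smul_smul, inv_mul_cancel₀ hm, one_smul]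

theorem exists_eulerOp_eq_shiftedJacobi (hα : -1 < α) (hβ : -1 < β) (i j n : ℕ) :
    ∃ r, eulerOp (β + i + 1) r = shiftedJacobi α β n ∧
      X ^ (j + i + 1) * r ∈ jacobiSpan α β (n - (j + i + 1)) (n + (j + i + 1)) := by
  have hβi : -1 < β + i := by linarith [(i.cast_nonneg : (0 : ℝ) ≤ i)]
  have hmem : shiftedJacobi α β n ∈ jacobiSpan (α + 1) (β + i + 1 - 1) (n - i - 1) n := by
    rw [add_sub_cancel_right]
    exact jacobiSpan_le_alpha_succ hα hβi _ _ <| jacobiSpan_le_beta_add hα hβ i _ _ <|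
      shiftedJacobi_mem_jacobiSpan le_rfl le_rfl
  obtain ⟨r, hr, hLr⟩ := jacobiSpan_le_map_eulerOp (by linarith) _ _ hmem
  refine ⟨r, hLr, ?_⟩
  rw [SetLike.mem_coe, add_assoc, ← Nat.cast_add_one] at hr
  have h := X_pow_mul_mem_jacobiSpan hα hβ j <| X_pow_mul_mem_jacobiSpan_of_beta_add hα hβ _ hr
  rw [← mul_assoc, ← pow_add, ← add_assoc] at h
  exact jacobiSpan_mono (by omega) (by omega) h

end jacobiSpan

theorem intervalIntegrable_one_add_div_two_rpow {s : ℝ} (hs : -1 < s) (x : ℝ) :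
    IntervalIntegrable (fun t : ℝ => ((1 + t) / 2) ^ s) volume (-1) x := by
  have h := ((intervalIntegral.intervalIntegrable_rpow' hs (a := 0) (b := (1 + x) / 2))
    |>.comp_add_right (1 / 2)).comp_mul_left (c := 1 / 2)
  convert h using 1
  · ext t; ring_nf
  · norm_num
  · ring

theorem integral_one_add_div_two_rpow {s : ℝ} (hs : -1 < s) (x : ℝ) :
    ∫ t in (-1 : ℝ)..x, ((1 + t) / 2) ^ s = 2 * ((1 + x) / 2) ^ (s + 1) / (s + 1) := by
  have h := intervalIntegral.integral_comp_add_div (fun u : ℝ => u ^ s) two_ne_zero (1 / 2)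
    (a := -1) (b := x)
  rw [show (fun t : ℝ => ((1 + t) / 2) ^ s) = fun t => (1 / 2 + t / 2) ^ s by ext; ring_nf, h,
    integral_rpow (Or.inl hs), show (1 / 2 + -1 / 2 : ℝ) = 0 by norm_num,
    Real.zero_rpow (by linarith), smul_eq_mul]
  ring_nf

noncomputable def jfpVar (p x : ℝ) : ℝ := ((1 + x) / 2) ^ (1 / p)

theorem jfpVar_rpow_mul_pow {p t : ℝ} (hp : p ≠ 0) (ht : 0 < 1 + t) (b : ℝ) (k : ℕ) :
    jfpVar p t ^ b * jfpVar p t ^ k = ((1 + t) / 2) ^ ((k + b) / p) := by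
  have hw : 0 < (1 + t) / 2 := by positivity
  rw [jfpVar, ← Real.rpow_natCast, ← Real.rpow_add (Real.rpow_pos_of_pos hw _),
    ← Real.rpow_mul hw.le]
  congr 1
  field_simp
  ring

theorem integral_jfpVar_rpow_mul_eval_eulerOp_monomial {p : ℕ} (hp : 0 < p) {b : ℝ}
    (hb : 0 < b + p) (k : ℕ) (a : ℝ) {x : ℝ} (hx : -1 < x) :
    IntervalIntegrable (fun t => jfpVar p t ^ b * (eulerOp (b + p) (monomial k a)).eval
      (jfpVar p t)) volume (-1) x ∧
    ∫ t in (-1 : ℝ)..x, jfpVar p t ^ b * (eulerOp (b + p) (monomial k a)).eval (jfpVar p t)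
      = 2 * p * (jfpVar p x ^ b * (X ^ p * monomial k a).eval (jfpVar p x)) := by
  have hp' : (p : ℝ) ≠ 0 := by positivity
  have hs : -1 < (k + b) / p := by
    rw [lt_div_iff₀ (by positivity)]
    linarith [(k.cast_nonneg : (0 : ℝ) ≤ k)]
  have heq : EqOn (fun t => ((k + (b + p)) * a) * ((1 + t) / 2) ^ ((k + b) / p))
      (fun t => jfpVar p t ^ b * (eulerOp (b + p) (monomial k a)).eval (jfpVar p t))
      (uIoo (-1) x) := by
    intro t ht
    rw [uIoo_of_le hx.le] at ht
    simp only [eulerOp_monomial, eval_monomial]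
    rw [← jfpVar_rpow_mul_pow hp' (by linarith [ht.1]) b k]
    ring
  refine ⟨((intervalIntegrable_one_add_div_two_rpow hs x).const_mul _).congr_uIoo heq, ?_⟩
  have hk : (k : ℝ) + b + p ≠ 0 := by linarith [(k.cast_nonneg : (0 : ℝ) ≤ k)]
  have hz : jfpVar p x ^ b * (jfpVar p x ^ p * jfpVar p x ^ k)
      = ((1 + x) / 2) ^ ((k + b + p) / p) := by
    rw [← pow_add, jfpVar_rpow_mul_pow hp' (by linarith) b]
    congr 1
    push_cast
    ring
  rw [← intervalIntegral.integral_congr_uIoo heq, intervalIntegral.integral_const_mul,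
    integral_one_add_div_two_rpow hs, eval_mul, eval_pow, eval_X, eval_monomial,
    show (k + b) / (p : ℝ) + 1 = (k + b + p) / p by field_simp, ← hz]
  field_simp
  ring

theorem integral_jfpVar_rpow_mul_eval_eulerOp {p : ℕ} (hp : 0 < p) {b : ℝ}
    (hb : 0 < b + p) (r : ℝ[X]) {x : ℝ} (hx : -1 < x) :
    IntervalIntegrable (fun t => jfpVar p t ^ b * (eulerOp (b + p) r).eval (jfpVar p t))
      volume (-1) x ∧
    ∫ t in (-1 : ℝ)..x, jfpVar p t ^ b * (eulerOp (b + p) r).eval (jfpVar p t)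
      = 2 * p * (jfpVar p x ^ b * (X ^ p * r).eval (jfpVar p x)) := by
  induction r using Polynomial.induction_on' with
  | add q r hq hr =>
    simp only [map_add, eval_add, mul_add] at hq hr ⊢
    exact ⟨hq.1.add hr.1, by rw [intervalIntegral.integral_add hq.1 hr.1, hq.2, hr.2]⟩
  | monomial k a => exact integral_jfpVar_rpow_mul_eval_eulerOp_monomial hp hb k a hx

theorem jfpQ_eq_rpow_mul_eval_shiftedJacobi (α β b p : ℝ) (m : ℕ) {x : ℝ} (hx : -1 ≤ x) :
    jfpQ α β b p m x = 2 ^ b * (jfpVar p x ^ b * (shiftedJacobi α β m).eval (jfpVar p x)) := by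
  have hz : 0 ≤ jfpVar p x := Real.rpow_nonneg (by linarith) _
  rw [jfpQ, eval_shiftedJacobi, ← jfpVar, Real.mul_rpow zero_le_two hz, mul_assoc]

/-- the integration operator in the JFP basis has bandwidths `(p, p)`. -/
theorem jfp_integration_banded
    (α β : ℝ) (hα : -1 < α) (hβ : -1 < β) (p : ℕ) (hp : 0 < p)
    (b : ℝ) (hb : -(p : ℝ) < b)
    (hβb : ∃ j : ℕ, β - b = (j : ℝ))
    (hbpβ : ∃ j : ℕ, b + p - 1 - β = (j : ℝ)) (n : ℕ) :
    ∃ c : ℕ → ℝ, ∀ x ∈ Set.Ioc (-1 : ℝ) 1,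
      (∫ t in (-1 : ℝ)..x, jfpQ α β b p n t)
        = ∑ m ∈ Finset.Icc (n - p) (n + p), c m * jfpQ α β b p m x := by
  obtain ⟨j, hj⟩ := hβb
  obtain ⟨i, hi⟩ := hbpβ
  have hpji : p = j + i + 1 := by exact_mod_cast (by linarith : (p : ℝ) = j + i + 1)
  obtain ⟨r, hr, hmem⟩ := exists_eulerOp_eq_shiftedJacobi hα hβ i j n
  rw [← hpji] at hmem
  obtain ⟨c, hc⟩ := exists_sum_of_mem_jacobiSpan hmem
  have hbp : 0 < b + p := by linarith only [hb]
  refine ⟨fun m => 2 * p * c m, fun x hx => ?_⟩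
  have hint := (integral_jfpVar_rpow_mul_eval_eulerOp hp hbp r hx.1).2
  rw [show b + p = β + i + 1 by linarith, hr] at hint
  calc (∫ t in (-1 : ℝ)..x, jfpQ α β b p n t)
      = ∫ t in (-1 : ℝ)..x, 2 ^ b * (jfpVar p t ^ b * (shiftedJacobi α β n).eval (jfpVar p t)) :=
        intervalIntegral.integral_congr fun t ht =>
          jfpQ_eq_rpow_mul_eval_shiftedJacobi α β b p n (by simp_all [uIcc_of_le hx.1.le])
    _ = ∑ m ∈ Finset.Icc (n - p) (n + p), 2 * p * c m * jfpQ α β b p m x := by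
        rw [intervalIntegral.integral_const_mul, hint, hc, eval_finsetSum, Finset.mul_sum,
          Finset.mul_sum, Finset.mul_sum]
        refine Finset.sum_congr rfl fun m _ => ?_
        rw [jfpQ_eq_rpow_mul_eval_shiftedJacobi α β b p m hx.1.le, eval_smul, smul_eq_mul]
        ring
end

section
/- Let α, β > −1, let p be a positive integer, let μ > 0 with μp = k a positive integer, and let b > −p be such that β − b and b + p − 1 − β are nonnegative integers. Let A_{m,n} be the coefficients with I^μ[Q_n^{(α,β,b,p)}] = Σ_{m=0}^{n+k} A_{m,n} Q_m^{(α,β,b,p)} on (−1,1] (A_{m,n} = 0 for m > n+k); let X_{m,n} be the coefficients with x·Q_n^{(α,β,b,p)}(x) = Σ_m X_{m,n} Q_m^{(α,β,b,p)}(x) (X_{m,n} = 0 unless |m−n| ≤ p); and let J_{m,n} be the coefficients with ∫_{−1}^{x} Q_n^{(α,β,b,p)}(t) dt = Σ_m J_{m,n} Q_m^{(α,β,b,p)}(x) (J_{m,n} = 0 unless |m−n| ≤ p). Then the fractional integration matrix satisfies the Sylvester equation A(X + μJ) = XA entrywise: for all m, n ∈ ℕ, Σ_j A_{m,j}(X_{j,n}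 + μ J_{j,n}) = Σ_j X_{m,j} A_{j,n}, where both sums have only finitely many nonzero terms. -/
open MeasureTheory

noncomputable def fracInt (μ : ℝ) (f : ℝ → ℝ) (x : ℝ) : ℝ :=
  (1 / Real.Gamma μ) * ∫ t in (-1 : ℝ)..x, (x - t) ^ (μ - 1) * f t

/-!
Writing `x = t + (x - t)` inside the Riemann–Liouville integral, the identity
`I^μ[t f(t) + μ ∫_{-1}^t f] (x) = x · I^μ f (x)` reduces to
`∫ (x - t)^μ f(t) dt = μ ∫ (x - t)^(μ-1) F(t) dt` for the primitive `F` of `f`, which is integration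
by parts. Taking `f = Q_n` and expanding in the JFP basis, the left side becomes
`∑ᵢ (A (X + μJ))ᵢₙ Qᵢ` and the right side `∑ᵢ (X A)ᵢₙ Qᵢ`. The `Qᵢ` are linearly independent on
`(-1, 1]`: the substitution
`x = 2((1+y)/2)^p - 1` turns them into `(1+y)^b Pᵢ(y)`, and `Pᵢ` has degree exactly `i`.
-/

open Set intervalIntegral Polynomial

theorem continuousOn_sub_rpow (x ν : ℝ) {s : Set ℝ} (hs : ∀ t ∈ s, t < x) :
    ContinuousOn (fun t : ℝ => (x - t) ^ ν) s := fun t ht =>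
  ((continuousAt_const.sub continuousAt_id).rpow_const
    (Or.inl (sub_ne_zero.mpr (hs t ht).ne'))).continuousWithinAt

theorem intervalIntegrable_sub_rpow_mul {ν a x : ℝ} (hν : -1 < ν) (hax : a < x) {g : ℝ → ℝ}
    (hg : IntervalIntegrable g volume a x) (hgc : ContinuousOn g (Ioc a x)) :
    IntervalIntegrable (fun t => (x - t) ^ ν * g t) volume a x := by
  obtain ⟨c, hac, hcx⟩ := exists_between hax
  refine IntervalIntegrable.trans (b := c) ?_ ?_
  · refine (hg.mono_set ?_).continuousOn_mul ?_
    · rw [uIcc_of_le hac.le, uIcc_of_le hax.le]; exact Icc_subset_Icc le_rfl hcx.le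
    · rw [uIcc_of_le hac.le]
      exact continuousOn_sub_rpow x ν fun t ht => ht.2.trans_lt hcx
  · have hker : IntervalIntegrable (fun t => (x - t) ^ ν) volume c x := by
      simpa using (intervalIntegrable_rpow' hν (a := x - c) (b := x - x)).comp_sub_left x
    refine hker.mul_continuousOn (hgc.mono ?_)
    rw [uIcc_of_le hcx.le]; exact Icc_subset_Ioc_iff hcx.le |>.mpr ⟨hac, le_rfl⟩

theorem integral_sub_rpow_mul_eq_mul_integral_primitive {μ x : ℝ} (hμ : 0 < μ)
    (hx : -1 < x) {f : ℝ → ℝ} (hf : IntervalIntegrable f volume (-1) x)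
    (hfc : ContinuousOn f (Ioc (-1) x)) :
    ∫ t in (-1:ℝ)..x, (x - t) ^ μ * f t
      = μ * ∫ t in (-1:ℝ)..x, (x - t) ^ (μ - 1) * ∫ s in (-1:ℝ)..t, f s := by
  have hIcc : uIcc (-1) x = Icc (-1) x := uIcc_of_le hx.le
  have hF : ContinuousOn (fun t => ∫ s in (-1:ℝ)..t, f s) (Icc (-1) x) := by
    simpa [hIcc] using continuousOn_primitive_interval' hf left_mem_uIcc
  have hparts := integral_mul_deriv_eq_deriv_mul_of_hasDerivAt
    (u := fun t => (x - t) ^ μ) (u' := fun t => -(μ * (x - t) ^ (μ - 1))) (v' := f)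
    (by rw [hIcc]; exact ((continuous_const.sub continuous_id).rpow_const
      fun _ => Or.inr hμ.le).continuousOn) (by rwa [hIcc])
    (fun t ht => by
      simp only [min_eq_left hx.le, max_eq_right hx.le] at ht
      simpa using ((hasDerivAt_id t).const_sub x).rpow_const (p := μ)
        (Or.inl (sub_ne_zero.mpr ht.2.ne')))
    (fun t ht => by
      simp only [min_eq_left hx.le, max_eq_right hx.le] at ht
      exact integral_hasDerivAt_right (hf.mono_set (by
          rw [hIcc, uIcc_of_le ht.1.le]; exact Icc_subset_Icc le_rfl ht.2.le))
        ((hfc.mono Ioo_subset_Ioc_self).stronglyMeasurableAtFilter isOpen_Ioo t ht)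
        ((hfc.mono Ioo_subset_Ioc_self).continuousAt (Ioo_mem_nhds ht.1 ht.2)))
    (by simpa using ((intervalIntegrable_rpow' (by linarith : -1 < μ - 1)
      (a := x + 1) (b := x - x)).comp_sub_left x).const_mul (-μ)) hf
  simp only [sub_self, Real.zero_rpow hμ.ne', zero_mul, integral_same, mul_zero, zero_sub, neg_mul,
    intervalIntegral.integral_neg, neg_neg] at hparts
  rw [hparts, ← intervalIntegral.integral_const_mul]
  simp only [mul_assoc]

theorem fracInt_id_mul_add_primitive {μ x : ℝ} (hμ : 0 < μ) (hx : -1 < x) {f : ℝ → ℝ}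
    (hf : IntervalIntegrable f volume (-1) x) (hfc : ContinuousOn f (Ioc (-1) x)) :
    fracInt μ (fun t => t * f t + μ * ∫ s in (-1:ℝ)..t, f s) x = x * fracInt μ f x := by
  set F : ℝ → ℝ := fun t => ∫ s in (-1:ℝ)..t, f s
  have hμ1 : -1 < μ - 1 := by linarith
  have hIcc : uIcc (-1) x = Icc (-1) x := uIcc_of_le hx.le
  have hF : ContinuousOn F (Icc (-1) x) := by
    simpa [hIcc] using continuousOn_primitive_interval' hf left_mem_uIcc
  have hI₁ : IntervalIntegrable (fun t => (x - t) ^ (μ - 1) * (t * f t)) volume (-1) x :=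
    intervalIntegrable_sub_rpow_mul hμ1 hx (hf.continuousOn_mul continuousOn_id)
      (continuousOn_id.mul hfc)
  have hI₂ : IntervalIntegrable (fun t => (x - t) ^ (μ - 1) * (μ * F t)) volume (-1) x :=
    intervalIntegrable_sub_rpow_mul hμ1 hx
      ((hF.mono (by rw [hIcc])).intervalIntegrable.const_mul μ)
      (continuousOn_const.mul (hF.mono Ioc_subset_Icc_self))
  have hI₃ : IntervalIntegrable (fun t => (x - t) ^ μ * f t) volume (-1) x :=
    intervalIntegrable_sub_rpow_mul (by linarith) hx hf hfc
  unfold fracInt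
  calc 1 / Real.Gamma μ * ∫ t in (-1:ℝ)..x, (x - t) ^ (μ - 1) * (t * f t + μ * F t)
      = 1 / Real.Gamma μ * ((∫ t in (-1:ℝ)..x, (x - t) ^ (μ - 1) * (t * f t))
          + ∫ t in (-1:ℝ)..x, (x - t) ^ (μ - 1) * (μ * F t)) := by
        rw [← integral_add hI₁ hI₂]; simp only [mul_add]
    _ = 1 / Real.Gamma μ * ((∫ t in (-1:ℝ)..x, (x - t) ^ (μ - 1) * (t * f t))
          + ∫ t in (-1:ℝ)..x, (x - t) ^ μ * f t) := by
        rw [integral_sub_rpow_mul_eq_mul_integral_primitive hμ hx hf hfc,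
          ← intervalIntegral.integral_const_mul]
        simp only [mul_left_comm μ, F]
    _ = 1 / Real.Gamma μ * ∫ t in (-1:ℝ)..x, (x - t) ^ (μ - 1) * (x * f t) := by
        rw [← integral_add hI₁ hI₃]
        congr 1
        refine integral_congr fun t ht => ?_
        rw [hIcc] at ht
        have hpow := Real.rpow_add_one' (sub_nonneg.mpr ht.2) (show μ - 1 + 1 ≠ 0 by linarith)
        rw [sub_add_cancel] at hpow
        rw [hpow]
        ring
    _ = x * (1 / Real.Gamma μ * ∫ t in (-1:ℝ)..x, (x - t) ^ (μ - 1) * f t) := by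
        simp only [mul_left_comm _ x, intervalIntegral.integral_const_mul]

theorem fracInt_finsetSum {μ x : ℝ} {ι : Type*} (s : Finset ι) (c : ι → ℝ) (f : ι → ℝ → ℝ)
    (hf : ∀ i ∈ s, IntervalIntegrable (fun t => (x - t) ^ (μ - 1) * f i t) volume (-1) x) :
    fracInt μ (fun t => ∑ i ∈ s, c i * f i t) x = ∑ i ∈ s, c i * fracInt μ (f i) x := by
  have hsum : ∀ t, (x - t) ^ (μ - 1) * ∑ i ∈ s, c i * f i t
      = ∑ i ∈ s, c i * ((x - t) ^ (μ - 1) * f i t) := fun t => by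
    rw [Finset.mul_sum]
    exact Finset.sum_congr rfl fun i _ => by ring
  simp only [fracInt, hsum]
  rw [integral_finsetSum fun i hi => (hf i hi).const_mul (c i), Finset.mul_sum]
  simp only [intervalIntegral.integral_const_mul]
  exact Finset.sum_congr rfl fun i _ => by ring

theorem fracInt_congr {μ x : ℝ} {f g : ℝ → ℝ} (hx : -1 ≤ x) (h : EqOn f g (Ioc (-1) x)) :
    fracInt μ f x = fracInt μ g x := by
  unfold fracInt
  congr 1
  refine integral_congr_ae (Filter.Eventually.of_forall fun t ht => ?_)
  rw [uIoc_of_le hx] at ht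
  rw [h ht]

theorem sum_range_eq_sum_range_of_eq_zero {M : Type*} [AddCommMonoid M] {f : ℕ → M} {a N : ℕ}
    (haN : a ≤ N) (hf : ∀ i, a ≤ i → f i = 0) :
    ∑ i ∈ Finset.range N, f i = ∑ i ∈ Finset.range a, f i :=
  (Finset.sum_subset (Finset.range_subset_range.mpr haN) fun i _ hi =>
    hf i (by simpa using hi)).symm

theorem sum_banded_mul_sum {R : Type*} [CommSemiring R] {A : ℕ → ℕ → R} {d N M : ℕ}
    (hA0 : ∀ i j, j + d < i → A i j = 0) (hNM : N + d ≤ M) {c q T : ℕ → R}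
    (hT : ∀ j, T j = ∑ i ∈ Finset.range (j + d + 1), A i j * q i) :
    ∑ i ∈ Finset.range M, (∑ j ∈ Finset.range N, A i j * c j) * q i
      = ∑ j ∈ Finset.range N, c j * T j := by
  simp only [Finset.sum_mul]
  rw [Finset.sum_comm]
  refine Finset.sum_congr rfl fun j hj => ?_
  have hj : j < N := Finset.mem_range.mp hj
  rw [hT, Finset.mul_sum, sum_range_eq_sum_range_of_eq_zero (a := j + d + 1) (by omega)
    fun i hi => by rw [hA0 i j (by omega)]; ring]
  exact Finset.sum_congr rfl fun i _ => by ring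

theorem continuous_jacobiP (α β : ℝ) (n : ℕ) : Continuous (jacobiP α β n) := by
  unfold jacobiP; fun_prop

theorem continuousOn_jfpQ (α β b p : ℝ) (n : ℕ) : ContinuousOn (jfpQ α β b p n) (Ioi (-1)) := by
  intro t ht
  have hw : 0 < (1 + t) / 2 := by linarith [mem_Ioi.mp ht]
  have hbase : ContinuousAt (fun s : ℝ => 2 * ((1 + s) / 2) ^ (1 / p)) t :=
    continuousAt_const.mul ((by fun_prop : ContinuousAt (fun s : ℝ => (1 + s) / 2) t).rpow_const
      (Or.inl hw.ne'))
  have h2 : 2 * ((1 + t) / 2) ^ (1 / p) ≠ 0 := by positivity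
  refine ((hbase.rpow_const (Or.inl h2)).mul ?_).continuousWithinAt
  exact (continuous_jacobiP α β n).continuousAt.comp (hbase.sub continuousAt_const)

theorem jfpQ_eq_one_add_rpow_mul (α β b p : ℝ) (n : ℕ) {t : ℝ} (ht : -1 ≤ t) :
    jfpQ α β b p n t = (1 + t) ^ (b / p)
      * (2 ^ b / 2 ^ (b / p) * jacobiP α β n (2 * ((1 + t) / 2) ^ (1 / p) - 1)) := by
  have h1t : 0 ≤ 1 + t := by linarith
  rw [jfpQ, Real.mul_rpow zero_le_two (by positivity), ← Real.rpow_mul (by positivity),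
    Real.div_rpow h1t zero_le_two, one_div_mul_eq_div]
  ring

theorem intervalIntegrable_jfpQ (α β : ℝ) {b p : ℝ} (hp : 0 < p) (hb : -p < b) (n : ℕ) {x : ℝ}
    (hx : -1 ≤ x) : IntervalIntegrable (jfpQ α β b p n) volume (-1) x := by
  have hpow : IntervalIntegrable (fun t : ℝ => (1 + t) ^ (b / p)) volume (-1) x := by
    have hbp : -1 < b / p := by rwa [lt_div_iff₀ hp, neg_one_mul]
    simpa using (intervalIntegrable_rpow' hbp (a := 0) (b := 1 + x)).comp_add_left 1
  have hroot : Continuous fun t : ℝ => ((1 + t) / 2) ^ (1 / p) :=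
    (by fun_prop : Continuous fun t : ℝ => (1 + t) / 2).rpow_const
      fun _ => Or.inr (by positivity)
  have hg : Continuous fun t : ℝ =>
      2 ^ b / 2 ^ (b / p) * jacobiP α β n (2 * ((1 + t) / 2) ^ (1 / p) - 1) :=
    continuous_const.mul ((continuous_jacobiP α β n).comp
      ((continuous_const.mul hroot).sub continuous_const))
  refine (hpow.mul_continuousOn hg.continuousOn).congr fun t ht => ?_
  rw [uIoc_of_le hx] at ht
  exact (jfpQ_eq_one_add_rpow_mul α β b p n ht.1.le).symm

theorem intervalIntegrable_sub_rpow_mul_jfpQ (α β : ℝ) {b p ν : ℝ} (hp : 0 < p) (hb : -p < b)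
    (hν : -1 < ν) (n : ℕ) {x : ℝ} (hx : -1 < x) :
    IntervalIntegrable (fun t => (x - t) ^ ν * jfpQ α β b p n t) volume (-1) x :=
  intervalIntegrable_sub_rpow_mul hν hx (intervalIntegrable_jfpQ α β hp hb n hx.le)
    ((continuousOn_jfpQ α β b p n).mono fun _ ht => ht.1)

noncomputable def jacobiPoly (α β : ℝ) (n : ℕ) : ℝ[X] :=
  ∑ k ∈ Finset.range (n + 1), C (Ccoef α β k n) * (1 + X) ^ k

theorem eval_jacobiPoly (α β : ℝ) (n : ℕ) (y : ℝ) :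
    (jacobiPoly α β n).eval y = jacobiP α β n y := by
  simp [jacobiPoly, jacobiP, eval_finsetSum]

theorem Ccoef_self_pos {α β : ℝ} (hαβ : -2 < α + β) (n : ℕ) : 0 < Ccoef α β n n := by
  rw [Ccoef, if_pos le_rfl, Nat.sub_self]
  simp only [pow_zero, ascPochhammer_zero, eval_one, one_mul, Nat.factorial_zero, Nat.cast_one,
    mul_one]
  rcases Nat.eq_zero_or_pos n with rfl | hn
  · simp
  · have : (1 : ℝ) ≤ n := by exact_mod_cast hn
    exact div_pos (ascPochhammer_pos _ _ (by linarith)) (by positivity)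

theorem degree_jacobiPoly {α β : ℝ} (hαβ : -2 < α + β) (n : ℕ) :
    (jacobiPoly α β n).degree = n := by
  refine degree_eq_of_le_of_coeff_ne_zero ?_ ?_
  · refine (degree_sum_le _ _).trans (Finset.sup_le fun k hk => ?_)
    compute_degree
    exact WithBot.coe_le_coe.mpr (Nat.lt_succ_iff.mp (Finset.mem_range.mp hk))
  · rw [jacobiPoly, finsetSum_coeff, Finset.sum_eq_single_of_mem n (by simp)]
    · simp [coeff_one_add_X_pow, (Ccoef_self_pos hαβ n).ne']
    · intro k hk hkn
      rw [coeff_C_mul, coeff_one_add_X_pow, Nat.choose_eq_zero_of_lt, Nat.cast_zero, mul_zero]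
      have := Finset.mem_range.mp hk
      omega

theorem jacobiP_coeff_eq_zero_of_sum_eq_zero {α β : ℝ} (hαβ : -2 < α + β) {S : Set ℝ}
    (hS : S.Infinite) {N : ℕ} {c : ℕ → ℝ}
    (hc : ∀ y ∈ S, ∑ i ∈ Finset.range N, c i * jacobiP α β i y = 0) :
    ∀ i < N, c i = 0 := by
  have hpoly : ∑ i ∈ Finset.range N, c i • jacobiPoly α β i = 0 :=
    eq_zero_of_infinite_isRoot _ <| hS.mono fun y hy => by
      simpa [eval_finsetSum, eval_jacobiPoly] using hc y hy
  intro i hi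
  exact linearIndependent_iff'.mp
    (Sequence.linearIndependent ⟨jacobiPoly α β, degree_jacobiPoly hαβ⟩) _ _ hpoly i
    (Finset.mem_range.mpr hi)

theorem jfpQ_two_mul_pow_sub_one (α β b : ℝ) {p : ℕ} (hp : p ≠ 0) (n : ℕ) {y : ℝ} (hy : -1 ≤ y) :
    jfpQ α β b p n (2 * ((1 + y) / 2) ^ p - 1) = (1 + y) ^ b * jacobiP α β n y := by
  have hw : 0 ≤ (1 + y) / 2 := by linarith
  have hroot : ((1 + (2 * ((1 + y) / 2) ^ p - 1)) / 2) ^ (1 / (p : ℝ)) = (1 + y) / 2 := by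
    rw [show (1 + (2 * ((1 + y) / 2) ^ p - 1)) / 2 = ((1 + y) / 2) ^ p by ring,
      ← Real.rpow_natCast, ← Real.rpow_mul hw, mul_one_div_cancel (by exact_mod_cast hp),
      Real.rpow_one]
  rw [jfpQ, hroot]
  ring_nf

theorem jfpQ_coeff_eq_zero_of_sum_eq_zero {α β : ℝ} (hαβ : -2 < α + β) (b : ℝ) {p : ℕ}
    (hp : p ≠ 0) {N : ℕ} {c : ℕ → ℝ}
    (hc : ∀ x ∈ Ioc (-1 : ℝ) 1, ∑ i ∈ Finset.range N, c i * jfpQ α β b p i x = 0) :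
    ∀ i < N, c i = 0 := by
  refine jacobiP_coeff_eq_zero_of_sum_eq_zero hαβ (Ioc_infinite (by norm_num : (-1 : ℝ) < 1))
    fun y hy => ?_
  have hw : 0 < (1 + y) / 2 := by linarith [hy.1]
  have hx : 2 * ((1 + y) / 2) ^ p - 1 ∈ Ioc (-1 : ℝ) 1 :=
    ⟨by linarith [pow_pos hw p], by linarith [pow_le_one₀ hw.le (by linarith [hy.2]) (n := p)]⟩
  have := hc _ hx
  simp only [jfpQ_two_mul_pow_sub_one α β b hp _ hy.1.le, mul_left_comm (c _),
    ← Finset.mul_sum] at this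
  exact (mul_eq_zero.mp this).resolve_left (Real.rpow_pos_of_pos (by linarith [hy.1]) b).ne'

theorem fracInt_matrix_sylvester_general
    (α β : ℝ) (hα : -1 < α) (hβ : -1 < β) (p : ℕ) (hp : 0 < p)
    (μ : ℝ) (hμ : 0 < μ) (k : ℕ)
    (b : ℝ) (hb : -(p : ℝ) < b)
    (A : ℕ → ℕ → ℝ)
    (hA : ∀ n : ℕ, ∀ x ∈ Set.Ioc (-1 : ℝ) 1,
      fracInt μ (jfpQ α β b p n) x
        = ∑ m ∈ Finset.range (n + k + 1), A m n * jfpQ α β b p m x)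
    (hA0 : ∀ m n : ℕ, n + k < m → A m n = 0)
    (X : ℕ → ℕ → ℝ)
    (hX : ∀ n : ℕ, ∀ x ∈ Set.Ioc (-1 : ℝ) 1,
      x * jfpQ α β b p n x
        = ∑ m ∈ Finset.range (n + p + 1), X m n * jfpQ α β b p m x)
    (hX0 : ∀ m n : ℕ, (n + p < m ∨ m + p < n) → X m n = 0)
    (J : ℕ → ℕ → ℝ)
    (hJ : ∀ n : ℕ, ∀ x ∈ Set.Ioc (-1 : ℝ) 1,
      (∫ t in (-1 : ℝ)..x, jfpQ α β b p n t)
        = ∑ m ∈ Finset.range (n + p + 1), J m n * jfpQ α β b p m x)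
    (hJ0 : ∀ m n : ℕ, (n + p < m ∨ m + p < n) → J m n = 0) :
    ∀ m n : ℕ,
      ∑ j ∈ Finset.range (n + p + k + 1), A m j * (X j n + μ * J j n)
        = ∑ j ∈ Finset.range (n + p + k + 1), X m j * A j n := by
  intro m n
  have hp' : (0 : ℝ) < p := by exact_mod_cast hp
  set Q := jfpQ α β b p
  set N := n + p + k + 1 with hN
  -- any `M > m` with `N + k ≤ M` and `N + p ≤ M` will do
  set M := m + n + 2 * (p + k) + 2 with hM
  have hcomb : ∀ t ∈ Ioc (-1 : ℝ) 1, ∑ j ∈ Finset.range N, (X j n + μ * J j n) * Q j t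
      = t * Q n t + μ * ∫ s in (-1 : ℝ)..t, Q n s := by
    intro t ht
    rw [sum_range_eq_sum_range_of_eq_zero (a := n + p + 1) (by omega) fun j hj => by
        rw [hX0 j n (Or.inl (by omega)), hJ0 j n (Or.inl (by omega))]; ring,
      hX n t ht, hJ n t ht, Finset.mul_sum, ← Finset.sum_add_distrib]
    exact Finset.sum_congr rfl fun j _ => by ring
  have hlhs : ∀ x ∈ Ioc (-1 : ℝ) 1, ∑ i ∈ Finset.range M,
      (∑ j ∈ Finset.range N, A i j * (X j n + μ * J j n)) * Q i x = x * fracInt μ (Q n) x := by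
    intro x hx
    rw [sum_banded_mul_sum hA0 (by omega) fun j => hA j x hx,
      ← fracInt_finsetSum _ _ _ fun j _ =>
        intervalIntegrable_sub_rpow_mul_jfpQ α β hp' hb (by linarith) j hx.1,
      fracInt_congr hx.1.le fun t ht => hcomb t ⟨ht.1, ht.2.trans hx.2⟩,
      fracInt_id_mul_add_primitive hμ hx.1 (intervalIntegrable_jfpQ α β hp' hb n hx.1.le)
        ((continuousOn_jfpQ α β b p n).mono fun t ht => ht.1)]
  have hrhs : ∀ x ∈ Ioc (-1 : ℝ) 1, ∑ i ∈ Finset.range M,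
      (∑ j ∈ Finset.range N, X i j * A j n) * Q i x = x * fracInt μ (Q n) x := by
    intro x hx
    rw [sum_banded_mul_sum (fun i j h => hX0 i j (Or.inl h)) (by omega) fun j => hX j x hx,
      hA n x hx, sum_range_eq_sum_range_of_eq_zero (a := n + k + 1) (by omega)
        fun j hj => by rw [hA0 j n (by omega)]; ring, Finset.mul_sum]
    exact Finset.sum_congr rfl fun j _ => by ring
  have hcoeff := jfpQ_coeff_eq_zero_of_sum_eq_zero (show -2 < α + β by linarith) b hp.ne' (N := M)
    (c := fun i => ∑ j ∈ Finset.range N, A i j * (X j n + μ * J j n)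
      - ∑ j ∈ Finset.range N, X i j * A j n) fun x hx => by
    simp only [sub_mul, Finset.sum_sub_distrib]
    exact sub_eq_zero.mpr ((hlhs x hx).trans (hrhs x hx).symm)
  exact sub_eq_zero.mp (hcoeff m (by omega))

/-- the fractional integration matrix satisfies the Sylvester equation
`A (X + μ J) = X A`. -/
theorem fracInt_matrix_sylvester
    (α β : ℝ) (hα : -1 < α) (hβ : -1 < β) (p : ℕ) (hp : 0 < p)
    (μ : ℝ) (hμ : 0 < μ) (k : ℕ) (hk : 0 < k) (hμp : μ * p = k)
    (b : ℝ) (hb : -(p : ℝ) < b)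
    (hβb : ∃ j : ℕ, β - b = (j : ℝ))
    (hbpβ : ∃ j : ℕ, b + p - 1 - β = (j : ℝ))
    (A : ℕ → ℕ → ℝ)
    (hA : ∀ n : ℕ, ∀ x ∈ Set.Ioc (-1 : ℝ) 1,
      fracInt μ (jfpQ α β b p n) x
        = ∑ m ∈ Finset.range (n + k + 1), A m n * jfpQ α β b p m x)
    (hA0 : ∀ m n : ℕ, n + k < m → A m n = 0)
    (X : ℕ → ℕ → ℝ)
    (hX : ∀ n : ℕ, ∀ x ∈ Set.Ioc (-1 : ℝ) 1,
      x * jfpQ α β b p n x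
        = ∑ m ∈ Finset.range (n + p + 1), X m n * jfpQ α β b p m x)
    (hX0 : ∀ m n : ℕ, (n + p < m ∨ m + p < n) → X m n = 0)
    (J : ℕ → ℕ → ℝ)
    (hJ : ∀ n : ℕ, ∀ x ∈ Set.Ioc (-1 : ℝ) 1,
      (∫ t in (-1 : ℝ)..x, jfpQ α β b p n t)
        = ∑ m ∈ Finset.range (n + p + 1), J m n * jfpQ α β b p m x)
    (hJ0 : ∀ m n : ℕ, (n + p < m ∨ m + p < n) → J m n = 0) :
    ∀ m n : ℕ,
      ∑ j ∈ Finset.range (n + p + k + 1), A m j * (X j n + μ * J j n)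
        = ∑ j ∈ Finset.range (n + p + k + 1), X m j * A j n :=
  fracInt_matrix_sylvester_general α β hα hβ p hp μ hμ k b hb A hA hA0 X hX hX0 J hJ hJ0
end
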